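/- arXiv:1111.1810 — 3 statements merged into one kernel-verified Lean document; each statement's English description precedes it below -/
import Mathlib

section
/- For real T > 0, (1/2)·arg Γ(1/2 + iT) − arg Γ(1/4 + iT/2) − (T·log 2)/2 − (1/4)·arctan(sinh(πT)) = 0, where arg Γ denotes the continuous branch of the argument of the Gamma function along the relevant vertical half-line starting from the real axis (i.e., the imaginary part of the principal/continuous branch of log Γ). -/
open Real Complex ComplexConjugate

/-! Put `s = 1/4 + it/2`. Since `1 - s = conj (s + 1/2)`, the reflection formula gives
`Γ(s + 1/2) = π / (conj Γ(s) · conj sin(πs))`, and Legendre's duplication formula becomes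
`Γ(s) π = Γ(1/2 + it) 2^(1/2 - it) √π conj Γ(s) conj sin(πs)`. After squaring,
`sin(πs)² = (1 + i sinh(πt))/2 = (cosh(πt)/2) e^(i arctan(sinh(πt)))`, so comparing arguments
shows that `2 a₁ - 4 a₂ - 2 t log 2 - arctan(sinh(πt))` lies in `2πℤ` for every `t`. Being
continuous and zero at `t = 0`, it is a lift of the constant loop through the covering
`ℝ → S¹`, hence identically zero. -/

theorem Complex.exp_mul_I_eq_one_of_mul_ofReal_eq {θ r R : ℝ} (hr : 0 < r) (hR : 0 ≤ R)
    (h : exp (θ * I) * r = R) : exp (θ * I) = 1 := by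
  have hrR : r = R := by
    simpa [norm_exp_ofReal_mul_I, abs_of_pos hr, abs_of_nonneg hR] using congrArg norm h
  subst hrR
  simpa [ofReal_ne_zero.mpr hr.ne'] using h

theorem Continuous.eq_zero_of_exp_mul_I_eq_one {X : Type*} [TopologicalSpace X]
    [PreconnectedSpace X] {F : X → ℝ} (hF : Continuous F) {x₀ : X} (h0 : F x₀ = 0)
    (h : ∀ x, Complex.exp (F x * I) = 1) : F = 0 :=
  Circle.isCoveringMap_exp.eq_of_comp_eq hF continuous_const
    (funext fun x ↦ Circle.ext <| by simp [Circle.coe_exp, h]) x₀ h0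

theorem Complex.Gamma_mul_pi_of_re_eq_quarter {s : ℂ} (hs : s.re = 1 / 4) :
    Gamma s * π =
      Gamma (2 * s) * 2 ^ (1 - 2 * s) * √π * conj (Gamma s) * conj (sin (π * s)) := by
  have hreflect := Gamma_mul_Gamma_one_sub s
  have hsin : sin (π * s) ≠ 0 := by
    intro h0
    rw [h0, div_zero] at hreflect
    exact mul_ne_zero (Gamma_ne_zero_of_re_pos (by rw [hs]; norm_num))
      (Gamma_ne_zero_of_re_pos (by simp [hs]; norm_num)) hreflect
  have hconj : 1 - s = conj (s + 1 / 2) := Complex.ext (by simp [hs]; norm_num) (by simp)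
  rw [hconj, Gamma_conj, eq_div_iff hsin] at hreflect
  have hreflect' := congrArg conj hreflect
  simp only [map_mul, conj_conj, conj_ofReal] at hreflect'
  linear_combination
    (-Gamma s) * hreflect' + conj (Gamma s) * conj (sin (π * s)) * Gamma_mul_Gamma_add_half s

theorem Complex.ofReal_cpow_add_mul_I {x : ℝ} (hx : 0 < x) (a b : ℝ) :
    (x : ℂ) ^ ((a : ℂ) + b * I) = ((x ^ a : ℝ) : ℂ) * exp ((b * Real.log x : ℝ) * I) := by
  rw [cpow_def_of_ne_zero (ofReal_ne_zero.mpr hx.ne'), ← ofReal_log hx.le,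
    Real.rpow_def_of_pos hx, ofReal_exp, ← exp_add]
  congr 1
  push_cast
  ring

theorem Complex.one_add_sinh_mul_I (y : ℝ) :
    (1 + Real.sinh y * I : ℂ) = Real.cosh y * exp (Real.arctan (Real.sinh y) * I) := by
  have hsqrt : √(1 + Real.sinh y ^ 2) = Real.cosh y := by
    rw [add_comm, ← Real.cosh_sq, Real.sqrt_sq (Real.cosh_pos y).le]
  rw [exp_mul_I, ← ofReal_cos, ← ofReal_sin, Real.cos_arctan, Real.sin_arctan, hsqrt]
  have := ofReal_ne_zero.mpr (Real.cosh_pos y).ne'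
  rw [ofReal_div, ofReal_div, ofReal_one]
  field_simp

theorem Complex.sin_sq_pi_mul_quarter_add (t : ℝ) :
    sin (π * (1 / 4 + I * t / 2)) ^ 2 =
      Real.cosh (π * t) / 2 * exp (Real.arctan (Real.sinh (π * t)) * I) := by
  rw [div_mul_eq_mul_div, ← one_add_sinh_mul_I, Complex.sin_sq, Complex.cos_sq,
    show 2 * (π * (1 / 4 + I * t / 2)) = π / 2 + (π * t : ℝ) * I by push_cast; ring,
    cos_add, cos_pi_div_two, sin_pi_div_two, sin_mul_I, ofReal_sinh]
  ring

theorem Complex.exp_Gamma_phase_combination_eq_one (t a₁ a₂ : ℝ)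
    (h₁ : Gamma (1 / 2 + I * t) = (‖Gamma (1 / 2 + I * t)‖ : ℂ) * exp (I * a₁))
    (h₂ : Gamma (1 / 4 + I * t / 2) = (‖Gamma (1 / 4 + I * t / 2)‖ : ℂ) * exp (I * a₂)) :
    exp ((2 * a₁ - 4 * a₂ - 2 * t * Real.log 2 - Real.arctan (Real.sinh (π * t)) : ℝ) * I) =
      1 := by
  set s : ℂ := 1 / 4 + I * t / 2
  set r₁ := ‖Gamma (1 / 2 + I * t)‖
  set r₂ := ‖Gamma s‖
  have hr₁ : 0 < r₁ := norm_pos_iff.mpr (Gamma_ne_zero_of_re_pos (by simp))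
  have hr₂ : 0 < r₂ := norm_pos_iff.mpr (Gamma_ne_zero_of_re_pos (by simp [s]))
  have key := congrArg (· ^ 2) (Gamma_mul_pi_of_re_eq_quarter (s := s) (by simp [s]))
  have hcpow : ((2 : ℂ) ^ (1 - 2 * s)) ^ 2 = 2 * exp ((-2 * t * Real.log 2 : ℝ) * I) := by
    rw [← cpow_nat_mul, show ((2 : ℕ) : ℂ) * (1 - 2 * s) = (1 : ℝ) + (-2 * t : ℝ) * I by
      simp only [s]; push_cast; ring, ← ofReal_ofNat, ofReal_cpow_add_mul_I two_pos]
    simp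
  have hsin : conj (sin (π * s)) ^ 2 =
      Real.cosh (π * t) / 2 * exp (-(Real.arctan (Real.sinh (π * t)) : ℝ) * I) := by
    rw [← map_pow, sin_sq_pi_mul_quarter_add, map_mul, map_div₀, conj_ofReal, map_ofNat,
      ← exp_conj, map_mul, conj_ofReal, conj_I, mul_neg, neg_mul]
  have hconj : conj (Gamma s) = r₂ * exp (-(I * a₂)) := by
    rw [h₂, map_mul, conj_ofReal, ← exp_conj, map_mul, conj_I, conj_ofReal, neg_mul]
  have hsplit :
      exp ((2 * a₁ - 4 * a₂ - 2 * t * Real.log 2 - Real.arctan (Real.sinh (π * t)) : ℝ) * I)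
        * exp (I * a₂) ^ 2 = exp (I * a₁) ^ 2 * exp ((-2 * t * Real.log 2 : ℝ) * I)
        * exp (-(I * a₂)) ^ 2 * exp (-(Real.arctan (Real.sinh (π * t)) : ℝ) * I) := by
    simp only [← exp_nat_mul, ← exp_add]
    congr 1
    push_cast
    ring
  simp only [mul_pow] at key
  rw [hcpow, hsin, hconj, ← ofReal_pow √π,
    Real.sq_sqrt pi_pos.le, show 2 * s = 1 / 2 + I * t by ring, h₁, h₂] at key
  refine exp_mul_I_eq_one_of_mul_ofReal_eq (r := r₁ ^ 2 * Real.cosh (π * t))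
    (by positivity) pi_pos.le ?_
  have hne : (r₂ : ℂ) ^ 2 * exp (I * a₂) ^ 2 * π ≠ 0 :=
    mul_ne_zero (mul_ne_zero (pow_ne_zero _ (ofReal_ne_zero.mpr hr₂.ne'))
      (pow_ne_zero _ (exp_ne_zero _))) (ofReal_ne_zero.mpr pi_pos.ne')
  refine mul_left_cancel₀ hne ?_
  rw [ofReal_mul, ofReal_pow]
  linear_combination
    (-1 : ℂ) * key + (r₂ : ℂ) ^ 2 * π * r₁ ^ 2 * Real.cosh (π * t) * hsplit

/-- For `T > 0`, `(1/2)·argΓ(1/2+iT) − argΓ(1/4+iT/2) − T·log 2/2 − (1/4)·arctan(sinh(πT)) = 0`,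
where `argΓ` denotes the continuous branch of the argument of `Γ` along the relevant
vertical half-line, vanishing on the real axis. -/
theorem arg_gamma_identity
    (a₁ a₂ : ℝ → ℝ) (hc₁ : Continuous a₁) (hc₂ : Continuous a₂)
    (h₁0 : a₁ 0 = 0) (h₂0 : a₂ 0 = 0)
    (h₁ : ∀ t : ℝ, Complex.Gamma (1 / 2 + Complex.I * t) =
      ((‖Complex.Gamma (1 / 2 + Complex.I * t)‖ : ℝ) : ℂ) *
        Complex.exp (Complex.I * (a₁ t)))
    (h₂ : ∀ t : ℝ, Complex.Gamma (1 / 4 + Complex.I * t / 2) =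
      ((‖Complex.Gamma (1 / 4 + Complex.I * t / 2)‖ : ℝ) : ℂ) *
        Complex.exp (Complex.I * (a₂ t))) :
    ∀ T : ℝ, 0 < T →
      (1 / 2) * a₁ T - a₂ T - T * Real.log 2 / 2
        - (1 / 4) * Real.arctan (Real.sinh (π * T)) = 0 := by
  set F : ℝ → ℝ := fun t ↦
    2 * a₁ t - 4 * a₂ t - 2 * t * Real.log 2 - Real.arctan (Real.sinh (π * t))
  have hF : F = 0 := Continuous.eq_zero_of_exp_mul_I_eq_one (x₀ := 0) (by fun_prop)
    (by simp [F, h₁0, h₂0]) fun t ↦ exp_Gamma_phase_combination_eq_one t _ _ (h₁ t) (h₂ t)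
  intro T _
  have hFT : F T = 0 := congrFun hF T
  simp only [F] at hFT
  linarith
end

section
/- For every real T, ∫₀^T [2cos(t·log X) + 4t·sin(t·log X)]/(1+4t²) dt − (1/√X)·∫₁^X sin(T·log y)/(√y · log y) dy = (1/√X)·arctan(2T), for any real X > 1. -/
/-!
Writing `sin (T log y) / log y = ∫₀ᵀ cos (t log y) dt` and exchanging the order of integration,
the `y`-integral becomes `∫₀ᵀ ∫₁ˣ cos (t log y) / √y dy dt`. The inner integral is elementary,
`√X · g(t) - 2 / (1 + 4t²)` with `g` the first integrand, and `∫₀ᵀ 2 / (1 + 4t²) dt = arctan (2T)`.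
-/

open MeasureTheory intervalIntegral Real Set

lemma hasDerivAt_sqrt_mul_cos_sin_log (τ : ℝ) {y : ℝ} (hy : 0 < y) :
    HasDerivAt
      (fun z => √z * (2 * cos (τ * log z) + 4 * τ * sin (τ * log z)) / (1 + 4 * τ ^ 2))
      (cos (τ * log y) / √y) y := by
  have hlog : HasDerivAt (fun z => τ * log z) (τ * y⁻¹) y := (hasDerivAt_log hy.ne').const_mul τ
  have h := ((hasDerivAt_sqrt hy.ne').mul
    ((((hasDerivAt_cos _).comp y hlog).const_mul 2).add
      (((hasDerivAt_sin _).comp y hlog).const_mul (4 * τ)))).div_const (1 + 4 * τ ^ 2)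
  refine h.congr_deriv ?_
  have hsqrt : √y ≠ 0 := (sqrt_pos.2 hy).ne'
  simp only [Pi.add_apply, Function.comp_apply]
  rw [show y⁻¹ = (√y ^ 2)⁻¹ by rw [sq_sqrt hy.le]]
  field_simp
  ring

lemma integral_cos_mul_log_div_sqrt {X : ℝ} (hX : 0 < X) (τ : ℝ) :
    ∫ y in (1 : ℝ)..X, cos (τ * log y) / √y
      = √X * ((2 * cos (τ * log X) + 4 * τ * sin (τ * log X)) / (1 + 4 * τ ^ 2))
        - 2 / (1 + 4 * τ ^ 2) := by
  have hpos : ∀ y ∈ uIcc 1 X, 0 < y := fun y hy =>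
    lt_of_lt_of_le (lt_min one_pos hX) hy.1
  rw [integral_eq_sub_of_hasDerivAt (fun y hy => hasDerivAt_sqrt_mul_cos_sin_log τ (hpos y hy))]
  · simp only [log_one, mul_zero, cos_zero, sin_zero, sqrt_one]
    ring
  · refine ContinuousOn.intervalIntegrable fun y hy => ?_
    have := hpos y hy
    exact ContinuousAt.continuousWithinAt (by fun_prop (disch := positivity))

lemma sin_mul_div_eq_integral_cos {u : ℝ} (hu : u ≠ 0) (T : ℝ) :
    sin (T * u) / u = ∫ t in (0 : ℝ)..T, cos (t * u) := by
  rw [integral_comp_mul_right cos hu, integral_cos, zero_mul, sin_zero, sub_zero, smul_eq_mul,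
    div_eq_inv_mul]

lemma integral_two_div_one_add_four_mul_sq (T : ℝ) :
    ∫ t in (0 : ℝ)..T, 2 / (1 + 4 * t ^ 2) = arctan (2 * T) := by
  have h : ∀ t : ℝ, 2 / (1 + 4 * t ^ 2) = 2 * (1 / (1 + (2 * t) ^ 2)) := fun t => by ring
  simp_rw [h]
  rw [intervalIntegral.integral_const_mul, integral_comp_mul_left (fun x => 1 / (1 + x ^ 2))
    two_ne_zero, integral_one_div_one_add_sq]
  simp

lemma integral_sin_mul_log_div_sqrt_mul_log {X : ℝ} (hX : 0 < X) (T : ℝ) :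
    ∫ y in (1 : ℝ)..X, sin (T * log y) / (√y * log y)
      = √X * (∫ t in (0 : ℝ)..T,
          (2 * cos (t * log X) + 4 * t * sin (t * log X)) / (1 + 4 * t ^ 2))
        - arctan (2 * T) := by
  have hpos : ∀ y ∈ uIcc 1 X, 0 < y := fun y hy =>
    lt_of_lt_of_le (lt_min one_pos hX) hy.1
  calc ∫ y in (1 : ℝ)..X, sin (T * log y) / (√y * log y)
      = ∫ y in (1 : ℝ)..X, ∫ t in (0 : ℝ)..T, cos (t * log y) / √y := by
        -- the integrands differ at `y = 1`, where Lean's `sin 0 / 0 = 0` but `∫₀ᵀ cos 0 = T`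
        refine integral_congr_ae ?_
        filter_upwards [Measure.ae_ne volume 1] with y hy1 hy
        have hlog : log y ≠ 0 := log_ne_zero_of_pos_of_ne_one (hpos y (uIoc_subset_uIcc hy)) hy1
        rw [intervalIntegral.integral_div, ← sin_mul_div_eq_integral_cos hlog, div_div,
          mul_comm (log y)]
    _ = ∫ t in (0 : ℝ)..T, ∫ y in (1 : ℝ)..X, cos (t * log y) / √y := by
        refine intervalIntegral_intervalIntegral_swap ?_
        refine (ContinuousOn.integrableOn_compact (isCompact_uIcc.prod isCompact_uIcc) ?_).mono_set
          (prod_mono uIoc_subset_uIcc uIoc_subset_uIcc)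
        rintro ⟨y, t⟩ ⟨hy, -⟩
        have := hpos y hy
        exact ContinuousAt.continuousWithinAt (by fun_prop (disch := positivity))
    _ = ∫ t in (0 : ℝ)..T, (√X * ((2 * cos (t * log X) + 4 * t * sin (t * log X))
          / (1 + 4 * t ^ 2)) - 2 / (1 + 4 * t ^ 2)) := by
        simp_rw [integral_cos_mul_log_div_sqrt hX]
    _ = _ := by
        have hden : Continuous fun t : ℝ => 1 + 4 * t ^ 2 := by fun_prop
        have hden_ne : ∀ t : ℝ, 1 + 4 * t ^ 2 ≠ 0 := fun t => by positivity
        rw [intervalIntegral.integral_sub, intervalIntegral.integral_const_mul,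
          integral_two_div_one_add_four_mul_sq]
        · exact ((Continuous.div (by fun_prop) hden hden_ne).const_mul _).intervalIntegrable _ _
        · exact (continuous_const.div hden hden_ne).intervalIntegrable _ _

theorem integral_difference_arctan (X : ℝ) (hX : 1 < X) (T : ℝ) :
    (∫ t in (0:ℝ)..T,
        (2 * Real.cos (t * Real.log X) + 4 * t * Real.sin (t * Real.log X)) / (1 + 4 * t ^ 2))
      - (1 / Real.sqrt X) *
        ∫ y in (1:ℝ)..X, Real.sin (T * Real.log y) / (Real.sqrt y * Real.log y)
    = (1 / Real.sqrt X) * Real.arctan (2 * T) := by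
  have hX₀ : 0 < X := zero_lt_one.trans hX
  have hsqrt : √X ≠ 0 := (sqrt_pos.2 hX₀).ne'
  rw [integral_sin_mul_log_div_sqrt_mul_log hX₀, one_div, mul_sub, inv_mul_cancel_left₀ hsqrt,
    sub_sub_cancel]
end

section
/- For real a > 0 and b > 0: ∫₀^∞ cos(bt)/(a² + t²) dt = (π/(2a))·e^{−a·b}. -/
/-!
The Fourier transform of `t ↦ exp (-a |t|)` is `ξ ↦ 2a / (a² + (2πξ)²)`: split the integral at `0`
into two integrals of complex exponentials. Both functions are integrable, so Fourier inversion at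
`b` followed by the substitution `t = 2πξ` gives `∫_ℝ cos (b t) / (a² + t²) dt = (π / a) e^{-a|b|}`.
The integrand is even, so the integral over `(0, ∞)` is half of that.
-/

open Real MeasureTheory Set FourierTransform
open Complex (I)
open scoped Complex

section

variable {a : ℝ}

lemma integrable_exp_neg_mul_abs (ha : 0 < a) :
    Integrable fun t : ℝ => rexp (-(a * |t|)) := by
  rw [← integrableOn_univ, ← Iic_union_Ioi (a := (0 : ℝ)), integrableOn_union]
  constructor
  · refine (integrableOn_exp_mul_Iic ha 0).congr_fun (fun t ht => ?_) measurableSet_Iic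
    rw [abs_of_nonpos ht, mul_neg, neg_neg]
  · refine (integrableOn_exp_mul_Ioi (neg_lt_zero.mpr ha) 0).congr_fun (fun t ht => ?_)
      measurableSet_Ioi
    simp only [abs_of_pos (mem_Ioi.mp ht), neg_mul]

lemma integrable_inv_sq_add_sq (ha : a ≠ 0) : Integrable fun x : ℝ => (a ^ 2 + x ^ 2)⁻¹ := by
  refine ((integrable_inv_one_add_sq.comp_div ha).const_mul (a ^ 2)⁻¹).congr
    (ae_of_all _ fun x => ?_)
  field_simp

lemma fourierChar_smul_exp_neg_mul_abs (v ξ : ℝ) :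
    𝐞 (-(v * ξ)) • (rexp (-(a * |v|)) : ℂ) = cexp (-(a * |v|) - 2 * π * v * ξ * I) := by
  rw [Circle.smul_def, fourierChar_apply, Complex.ofReal_exp, smul_eq_mul, ← Complex.exp_add]
  push_cast
  ring_nf

lemma inv_sub_mul_I_add_inv_add_mul_I (ha : a ≠ 0) (w : ℝ) :
    ((a : ℂ) - w * I)⁻¹ + ((a : ℂ) + w * I)⁻¹ = ((2 * a / (a ^ 2 + w ^ 2) : ℝ) : ℂ) := by
  have hmul : ((a : ℂ) - w * I) * (a + w * I) = ((a ^ 2 + w ^ 2 : ℝ) : ℂ) := by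
    push_cast; ring_nf; rw [Complex.I_sq]; ring
  have hpos : ((a ^ 2 + w ^ 2 : ℝ) : ℂ) ≠ 0 := Complex.ofReal_ne_zero.mpr (by positivity)
  rw [inv_add_inv (left_ne_zero_of_mul (hmul ▸ hpos)) (right_ne_zero_of_mul (hmul ▸ hpos)), hmul]
  push_cast
  ring

lemma fourier_exp_neg_mul_abs (ha : 0 < a) (ξ : ℝ) :
    𝓕 (fun t : ℝ => (rexp (-(a * |t|)) : ℂ)) ξ
      = ((2 * a / (a ^ 2 + (2 * π * ξ) ^ 2) : ℝ) : ℂ) := by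
  have hint : Integrable fun v : ℝ => 𝐞 (-(v * ξ)) • (rexp (-(a * |v|)) : ℂ) := by
    simpa only [Real.inner_apply] using
      (Real.fourierIntegral_convergent_iff ξ).mpr (integrable_exp_neg_mul_abs ha).ofReal
  have hIic : ∫ v in Iic (0 : ℝ), 𝐞 (-(v * ξ)) • (rexp (-(a * |v|)) : ℂ)
      = ((a : ℂ) - (2 * π * ξ : ℝ) * I)⁻¹ := by
    rw [setIntegral_congr_fun measurableSet_Iic
      (g := fun v : ℝ => cexp ((a - (2 * π * ξ : ℝ) * I) * v)) fun v hv => by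
        rw [fourierChar_smul_exp_neg_mul_abs, abs_of_nonpos hv]; congr 1; push_cast; ring,
      integral_exp_mul_complex_Iic (by simpa using ha), Complex.ofReal_zero, mul_zero,
      Complex.exp_zero, one_div]
  have hIoi : ∫ v in Ioi (0 : ℝ), 𝐞 (-(v * ξ)) • (rexp (-(a * |v|)) : ℂ)
      = ((a : ℂ) + (2 * π * ξ : ℝ) * I)⁻¹ := by
    rw [setIntegral_congr_fun measurableSet_Ioi
      (g := fun v : ℝ => cexp (-(a + (2 * π * ξ : ℝ) * I) * v)) fun v hv => by
        rw [fourierChar_smul_exp_neg_mul_abs, abs_of_pos hv]; congr 1; push_cast; ring,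
      integral_exp_mul_complex_Ioi (by simpa using ha), Complex.ofReal_zero, mul_zero,
      Complex.exp_zero, neg_div_neg_eq, one_div]
  rw [Real.fourier_real_eq, ← intervalIntegral.integral_Iic_add_Ioi hint.integrableOn
    hint.integrableOn, hIic, hIoi, inv_sub_mul_I_add_inv_add_mul_I ha.ne']

lemma re_fourierInv_ofReal {G : ℝ → ℝ} (hG : Integrable G) (x : ℝ) :
    (𝓕⁻ (fun ξ => (G ξ : ℂ)) x).re = ∫ ξ, cos (2 * π * ξ * x) * G ξ := by
  have hint : Integrable fun ξ : ℝ => 𝐞 (inner ℝ ξ x) • (G ξ : ℂ) := by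
    simpa using (Real.fourierIntegral_convergent_iff (-x)).mpr hG.ofReal
  rw [Real.fourierInv_eq, ← RCLike.re_to_complex, ← integral_re hint]
  congr 1 with ξ
  rw [Circle.smul_def, fourierChar_apply, smul_eq_mul, RCLike.re_to_complex,
    Complex.re_mul_ofReal, Real.inner_apply, ← mul_assoc, Complex.exp_ofReal_mul_I_re]

lemma integral_cos_mul_fourier_exp_neg_mul_abs (ha : 0 < a) (b : ℝ) :
    ∫ ξ, cos (2 * π * ξ * b) * (2 * a / (a ^ 2 + (2 * π * ξ) ^ 2)) = rexp (-(a * |b|)) := by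
  set G : ℝ → ℝ := fun ξ => 2 * a / (a ^ 2 + (2 * π * ξ) ^ 2)
  have hG : Integrable G :=
    (((integrable_inv_sq_add_sq ha.ne').comp_mul_left' (by positivity : 2 * π ≠ 0)).const_mul
      (2 * a)).congr (ae_of_all _ fun ξ => by simp [G, div_eq_mul_inv])
  have hF : 𝓕 (fun t : ℝ => (rexp (-(a * |t|)) : ℂ)) = fun ξ => (G ξ : ℂ) :=
    funext (fourier_exp_neg_mul_abs ha)
  have hinv := (integrable_exp_neg_mul_abs ha).ofReal.fourierInv_fourier_eq (hF ▸ hG.ofReal)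
    (v := b) (by fun_prop : Continuous fun t : ℝ => (rexp (-(a * |t|)) : ℂ)).continuousAt
  rw [← re_fourierInv_ofReal hG, ← hF, hinv, Complex.ofReal_re]

lemma integral_cos_mul_div_sq_add_sq (ha : 0 < a) (b : ℝ) :
    ∫ t, cos (b * t) / (a ^ 2 + t ^ 2) = π / a * rexp (-(a * |b|)) := by
  have hrescale : ∫ ξ, cos (2 * π * ξ * b) * (2 * a / (a ^ 2 + (2 * π * ξ) ^ 2))
      = 2 * a * ∫ ξ, cos (b * (2 * π * ξ)) / (a ^ 2 + (2 * π * ξ) ^ 2) := by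
    rw [← integral_const_mul]
    congr 1 with ξ
    rw [mul_comm b]
    ring
  have key := integral_cos_mul_fourier_exp_neg_mul_abs ha b
  rw [hrescale, Measure.integral_comp_mul_left (fun t => cos (b * t) / (a ^ 2 + t ^ 2)),
    abs_of_pos (by positivity), smul_eq_mul] at key
  rw [← key]
  field_simp

end

theorem integral_cos_div (a b : ℝ) (ha : 0 < a) (hb : 0 < b) :
    ∫ t in Set.Ioi (0:ℝ), Real.cos (b * t) / (a ^ 2 + t ^ 2)
      = (π / (2 * a)) * Real.exp (-(a * b)) := by
  have heven (t : ℝ) : cos (b * |t|) / (a ^ 2 + |t| ^ 2) = cos (b * t) / (a ^ 2 + t ^ 2) := by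
    rcases abs_choice t with h | h <;> simp [h]
  have hhalf := integral_comp_abs (f := fun t => cos (b * t) / (a ^ 2 + t ^ 2))
  simp only [heven, integral_cos_mul_div_sq_add_sq ha, abs_of_pos hb] at hhalf
  linear_combination -hhalf / 2
end
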